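/- Let c and c′ be candidates such that c′ does not Pareto-dominate c (i.e., some voter weakly prefers c over c′). Then for every metric d consistent with the rankings, the egalitarian cost satisfies max_{v∈V} d(v,c) ≤ 3 · max_{v∈V} d(v,c′). -/

import Mathlib

/- Let `u` be a voter with `d(u,c) ≤ d(u,c')` and `R` the egalitarian cost of `c'`. Then
`d(c',c) ≤ d(c',u) + d(u,c) ≤ 2R`, so every voter `v` has `d(v,c) ≤ d(v,c') + d(c',c) ≤ 3R`. -/

/-- Voter `v` prefers candidate `c` over `c'` (lower rank is better). -/
def Prefers {V C : Type*} {m : ℕ} (rank : V → C ≃ Fin m) (v : V) (c c' : C) : Prop :=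
  rank v c < rank v c'

theorem dist_le_three_mul_of_dist_le {α : Type*} {d : α → α → ℝ}
    (hsymm : ∀ x y, d x y = d y x) (htri : ∀ x y z, d x z ≤ d x y + d y z)
    {v u a b : α} {R : ℝ} (hv : d v b ≤ R) (hu : d u b ≤ R) (hab : d u a ≤ d u b) :
    d v a ≤ 3 * R := by
  have hba : d b a ≤ 2 * R := by
    calc d b a ≤ d b u + d u a := htri b u a
      _ = d u b + d u a := by rw [hsymm b u]
      _ ≤ 2 * R := by linarith
  calc d v a ≤ d v b + d b a := htri v b a
    _ ≤ 3 * R := by linarith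

theorem dist_le_of_rank_le {V C : Type*} {m : ℕ} (rank : V → C ≃ Fin m)
    (d : V ⊕ C → V ⊕ C → ℝ)
    (hcons : ∀ (v : V) (c c' : C), Prefers rank v c c' →
      d (Sum.inl v) (Sum.inr c) ≤ d (Sum.inl v) (Sum.inr c'))
    {v : V} {c c' : C} (h : rank v c ≤ rank v c') :
    d (Sum.inl v) (Sum.inr c) ≤ d (Sum.inl v) (Sum.inr c') := by
  rcases h.lt_or_eq with hlt | heq
  · exact hcons v c c' hlt
  · rw [(rank v).injective heq]

theorem egalitarian_non_domination_general {V C : Type*} [Fintype V] [Nonempty V] {m : ℕ}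
    (rank : V → C ≃ Fin m)
    (d : V ⊕ C → V ⊕ C → ℝ)
    (hsymm : ∀ x y, d x y = d y x)
    (htri : ∀ x y z, d x z ≤ d x y + d y z)
    (hcons : ∀ (v : V) (c c' : C), Prefers rank v c c' →
      d (Sum.inl v) (Sum.inr c) ≤ d (Sum.inl v) (Sum.inr c'))
    (c c' : C) (hnd : ∃ v : V, rank v c ≤ rank v c') :
    Finset.univ.sup' Finset.univ_nonempty (fun v : V => d (Sum.inl v) (Sum.inr c)) ≤
      3 * Finset.univ.sup' Finset.univ_nonempty
        (fun v : V => d (Sum.inl v) (Sum.inr c')) := by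
  obtain ⟨u, hu⟩ := hnd
  have hR : ∀ v : V, d (Sum.inl v) (Sum.inr c') ≤ Finset.univ.sup' Finset.univ_nonempty
      (fun v : V => d (Sum.inl v) (Sum.inr c')) :=
    fun v => Finset.le_sup' (fun v : V => d (Sum.inl v) (Sum.inr c')) (Finset.mem_univ v)
  refine Finset.sup'_le _ _ fun v _ => ?_
  exact dist_le_three_mul_of_dist_le hsymm htri (hR v) (hR u)
    (dist_le_of_rank_le rank d hcons hu)

/-- If `c'` does not Pareto-dominate `c` (some voter weakly prefers `c` over `c'`),
then the egalitarian cost of `c` is at most 3 times that of `c'`. -/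
theorem egalitarian_non_domination {V C : Type*} [Fintype V] [Nonempty V] {m : ℕ}
    (rank : V → C ≃ Fin m)
    (d : V ⊕ C → V ⊕ C → ℝ)
    (hrefl : ∀ x, d x x = 0)
    (hsymm : ∀ x y, d x y = d y x)
    (htri : ∀ x y z, d x z ≤ d x y + d y z)
    (hcons : ∀ (v : V) (c c' : C), Prefers rank v c c' →
      d (Sum.inl v) (Sum.inr c) ≤ d (Sum.inl v) (Sum.inr c'))
    (c c' : C) (hnd : ∃ v : V, rank v c ≤ rank v c') :
    Finset.univ.sup' Finset.univ_nonempty (fun v : V => d (Sum.inl v) (Sum.inr c)) ≤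
      3 * Finset.univ.sup' Finset.univ_nonempty
        (fun v : V => d (Sum.inl v) (Sum.inr c')) :=
  egalitarian_non_domination_general rank d hsymm htri hcons c c' hnd
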